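/- Let p ≥ 1 and let r > 0 satisfy r ≤ 1 and p·r ≤ 1. Then the interval ((p·r/2)^{1/p}, (p·r)^{1/p}] can be covered by at most (8·p^{1/p}·(1 − 2^{−1/p}) + 1)·r^{−(1 − 1/p)} intervals, each of Euclidean diameter at most r/8. -/

import Mathlib

/-! The annulus is an interval of length `L = p^{1/p} (1 - 2^{-1/p}) r^{1/p}`, so `⌈8 L / r⌉`
consecutive closed intervals of length `r/8` cover it, and `r^{1/p} / r = r^{-(1 - 1/p)} ≥ 1`
absorbs the rounding. -/

open Set

theorem Ioc_subset_iUnion_Icc_nat_ceil {a b δ : ℝ} (hδ : 0 < δ) :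
    Ioc a b ⊆ ⋃ j : Fin ⌈(b - a) / δ⌉₊, Icc (a + j * δ) (a + (j + 1) * δ) := by
  rintro x ⟨hax, hxb⟩
  set k := ⌈(x - a) / δ⌉₊
  -- `x` lies in the interval with index `k - 1`
  have hk : 0 < k := Nat.ceil_pos.2 (div_pos (sub_pos.2 hax) hδ)
  have hkN : k ≤ ⌈(b - a) / δ⌉₊ := Nat.ceil_le_ceil (by gcongr)
  have hcast : ((k - 1 : ℕ) : ℝ) + 1 = k := by
    rw [Nat.cast_sub (by omega), Nat.cast_one, sub_add_cancel]
  refine mem_iUnion.2 ⟨⟨k - 1, by omega⟩, ?_, ?_⟩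
  · have : ((k - 1 : ℕ) : ℝ) < (x - a) / δ := Nat.lt_ceil.1 (by omega)
    rw [lt_div_iff₀ hδ] at this
    linarith
  · have : (x - a) / δ ≤ k := Nat.le_ceil _
    rw [div_le_iff₀ hδ] at this
    simp only [hcast]
    linarith

theorem Real.rpow_sub_div_two_rpow {c : ℝ} (hc : 0 ≤ c) (s : ℝ) :
    c ^ s - (c / 2) ^ s = c ^ s * (1 - 2 ^ (-s)) := by
  rw [Real.div_rpow hc zero_le_two, Real.rpow_neg zero_le_two]
  ring

theorem poly_annulus_cover_general
    (p r : ℝ) (hp : 1 ≤ p) (hr0 : 0 < r) (hr1 : r ≤ 1) :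
    ∃ N : ℕ,
      (N : ℝ) ≤ (8 * p ^ (1 / p) * (1 - 2 ^ (-(1 / p) : ℝ)) + 1)
                  * r ^ (-(1 - 1 / p)) ∧
      ∃ I : Fin N → Set ℝ,
        (∀ j, ∃ u v : ℝ, I j = Set.Icc u v) ∧
        Set.Ioc ((p * r / 2) ^ (1 / p)) ((p * r) ^ (1 / p)) ⊆ ⋃ j, I j ∧
        ∀ j, ∀ x ∈ I j, ∀ y ∈ I j, |x - y| ≤ r / 8 := by
  have hp0 : 0 < p := one_pos.trans_le hp
  have hs1 : 1 / p ≤ 1 := (div_le_one hp0).2 hp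
  have hlen : (p * r) ^ (1 / p) - (p * r / 2) ^ (1 / p)
      = 8 * p ^ (1 / p) * (1 - 2 ^ (-(1 / p) : ℝ)) * r ^ (-(1 - 1 / p)) * (r / 8) := by
    rw [Real.rpow_sub_div_two_rpow (by positivity), Real.mul_rpow hp0.le hr0.le,
      show -(1 - 1 / p) = 1 / p - 1 by ring, Real.rpow_sub hr0, Real.rpow_one]
    field_simp
  have hgap : 0 ≤ 1 - (2 : ℝ) ^ (-(1 / p) : ℝ) :=
    sub_nonneg.2 (Real.rpow_le_one_of_one_le_of_nonpos one_le_two (neg_nonpos.2 (by positivity)))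
  have hscale : 1 ≤ r ^ (-(1 - 1 / p)) :=
    Real.one_le_rpow_of_pos_of_le_one_of_nonpos hr0 hr1 (by linarith)
  refine ⟨_, ?_, _, fun j => ⟨_, _, rfl⟩,
    Ioc_subset_iUnion_Icc_nat_ceil (δ := r / 8) (by positivity),
    fun j x hx y hy => Real.dist_le_of_mem_Icc hx hy |>.trans_eq (by ring)⟩
  rw [hlen, mul_div_cancel_right₀ _ (by positivity)]
  calc _ ≤ 8 * p ^ (1 / p) * (1 - 2 ^ (-(1 / p) : ℝ)) * r ^ (-(1 - 1 / p)) + 1 :=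
        (Nat.ceil_lt_add_one (by positivity)).le
    _ ≤ _ := by nlinarith [mul_nonneg (by positivity : (0 : ℝ) ≤ 8 * p ^ (1 / p)) hgap]

/-- Example 3 (covering bound): the gap annulus ((pr/2)^{1/p}, (pr)^{1/p}]
can be covered by at most (8 p^{1/p}(1 − 2^{−1/p}) + 1)·r^{−(1−1/p)}
intervals, each of Euclidean diameter at most r/8. -/
theorem poly_annulus_cover
    (p r : ℝ) (hp : 1 ≤ p) (hr0 : 0 < r) (hr1 : r ≤ 1) (hpr : p * r ≤ 1) :
    ∃ N : ℕ,
      (N : ℝ) ≤ (8 * p ^ (1 / p) * (1 - 2 ^ (-(1 / p) : ℝ)) + 1)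
                  * r ^ (-(1 - 1 / p)) ∧
      ∃ I : Fin N → Set ℝ,
        (∀ j, ∃ u v : ℝ, I j = Set.Icc u v) ∧
        Set.Ioc ((p * r / 2) ^ (1 / p)) ((p * r) ^ (1 / p)) ⊆ ⋃ j, I j ∧
        ∀ j, ∀ x ∈ I j, ∀ y ∈ I j, |x - y| ≤ r / 8 :=
  poly_annulus_cover_general p r hp hr0 hr1
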